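/- Let (X, μ) be a finite measure space, 1 < r < 2, λ > 0, and let g : X → M₃(ℝ) be measurable with ∫_X |g|² dμ < ∞. Then ∫_X ( 1 − (1 + λ|g(x)|²)^{r/2−1} ) |g(x)| dμ(x) ≤ λ^{1−r/2} μ(X)^{(r−1)/2} ( ∫_X |g|² dμ )^{(3−r)/2}. (Integrated estimate in the proof of Proposition 3.1 of the paper showing the nonlinear viscosity correction vanishes for 1 < r < 2.) -/

import Mathlib

/-!
Subadditivity of `t ↦ t ^ b` for `0 ≤ b ≤ 1` gives `1 - (1 + t) ^ (-b) ≤ t ^ b`; with `t = λ|g|²`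
and `b = 1 - r/2` the integrand is at most `λ^{1-r/2} |g|^{3-r}`. Since `3 - r < 2`, Hölder's
inequality against the constant `1` bounds `∫ |g|^{3-r}` by `(∫ |g|²)^{(3-r)/2} μ(X)^{(r-1)/2}`.
-/

open MeasureTheory ENNReal

noncomputable section

/-- 3×3 real matrices, with the (homogeneous) sup norm. -/
abbrev M3 := Fin 3 → Fin 3 → ℝ

lemma Real.one_sub_one_add_rpow_neg_le_rpow {b t : ℝ} (hb0 : 0 ≤ b) (hb1 : b ≤ 1) (ht : 0 ≤ t) :
    1 - (1 + t) ^ (-b) ≤ t ^ b := by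
  set u := (1 + t) ^ b
  have hu : 1 ≤ u := Real.one_le_rpow (by linarith) hb0
  have hsub : u ≤ 1 + t ^ b := by
    simpa using Real.rpow_add_le_add_rpow zero_le_one ht hb0 hb1
  -- `1 - u⁻¹ ≤ u - 1` for `u ≥ 1`, since the difference is `(u - 1) (1 - u⁻¹)`.
  have hinv : 1 - u⁻¹ ≤ u - 1 := by
    have : u⁻¹ ≤ 1 := inv_le_one_of_one_le₀ hu
    nlinarith [mul_inv_cancel₀ (by positivity : u ≠ 0)]
  rw [Real.rpow_neg (by linarith)]
  linarith

lemma Real.one_sub_one_add_mul_sq_rpow_mul_le {r lam s : ℝ} (hr0 : 0 ≤ r) (hr2 : r ≤ 2)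
    (hlam : 0 ≤ lam) (hs : 0 ≤ s) :
    (1 - (1 + lam * s ^ 2) ^ (r / 2 - 1)) * s ≤ lam ^ (1 - r / 2) * s ^ (3 - r) := by
  have key := Real.one_sub_one_add_rpow_neg_le_rpow (b := 1 - r / 2) (t := lam * s ^ 2)
    (by linarith) (by linarith) (by positivity)
  have hsq : (s ^ 2) ^ (1 - r / 2) = s ^ (2 - r) := by
    rw [← Real.rpow_natCast, ← Real.rpow_mul hs]; ring_nf
  calc (1 - (1 + lam * s ^ 2) ^ (r / 2 - 1)) * s
      ≤ (lam * s ^ 2) ^ (1 - r / 2) * s := by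
        gcongr; rwa [show r / 2 - 1 = -(1 - r / 2) by ring]
    _ = lam ^ (1 - r / 2) * s ^ (2 - r + 1) := by
        rw [Real.mul_rpow hlam (by positivity), hsq, Real.rpow_add_one' hs (by linarith)]; ring
    _ = lam ^ (1 - r / 2) * s ^ (3 - r) := by ring_nf

theorem MeasureTheory.lintegral_enorm_rpow_le_mul_measure_univ {X ε : Type*} [MeasurableSpace X]
    [TopologicalSpace ε] [ContinuousENorm ε] {μ : Measure X} {f : X → ε}
    (hf : AEStronglyMeasurable f μ) {p q : ℝ} (hp : 0 < p) (hpq : p ≤ q) :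
    ∫⁻ x, ‖f x‖ₑ ^ p ∂μ ≤ (∫⁻ x, ‖f x‖ₑ ^ q ∂μ) ^ (p / q) * μ Set.univ ^ (1 - p / q) := by
  have h := ENNReal.rpow_le_rpow (eLpNorm'_le_eLpNorm'_mul_rpow_measure_univ hp hpq hf) hp.le
  rw [eLpNorm'_eq_lintegral_enorm, eLpNorm'_eq_lintegral_enorm,
    ENNReal.mul_rpow_of_nonneg _ _ hp.le, ← ENNReal.rpow_mul, ← ENNReal.rpow_mul,
    ← ENNReal.rpow_mul, one_div_mul_cancel hp.ne', ENNReal.rpow_one] at h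
  convert h using 3 <;> field_simp

theorem integrated_estimate_one_lt_r_lt_two_general
    {X : Type*} [MeasurableSpace X] (μ : Measure X)
    (r lam : ℝ) (hr1 : 1 < r) (hr2 : r < 2) (hlam : 0 < lam)
    (g : X → M3) (hg : Measurable g) :
    ∫⁻ x, ENNReal.ofReal ((1 - (1 + lam * ‖g x‖ ^ 2) ^ (r / 2 - 1)) * ‖g x‖) ∂μ ≤
      ENNReal.ofReal (lam ^ (1 - r / 2)) * (μ Set.univ) ^ ((r - 1) / 2) *
        (∫⁻ x, (‖g x‖₊ : ℝ≥0∞) ^ (2 : ℝ) ∂μ) ^ ((3 - r) / 2) := by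
  have pointwise (x : X) :
      ENNReal.ofReal ((1 - (1 + lam * ‖g x‖ ^ 2) ^ (r / 2 - 1)) * ‖g x‖) ≤
        ENNReal.ofReal (lam ^ (1 - r / 2)) * ‖g x‖ₑ ^ (3 - r) := by
    rw [← ofReal_norm, ENNReal.ofReal_rpow_of_nonneg (norm_nonneg _) (by linarith),
      ← ENNReal.ofReal_mul (by positivity)]
    exact ofReal_le_ofReal (Real.one_sub_one_add_mul_sq_rpow_mul_le (by linarith) hr2.le
      hlam.le (norm_nonneg _))
  have holder := lintegral_enorm_rpow_le_mul_measure_univ hg.aestronglyMeasurable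
    (μ := μ) (p := 3 - r) (q := 2) (by linarith) (by linarith)
  calc _ ≤ ∫⁻ x, ENNReal.ofReal (lam ^ (1 - r / 2)) * ‖g x‖ₑ ^ (3 - r) ∂μ :=
        lintegral_mono pointwise
    _ = ENNReal.ofReal (lam ^ (1 - r / 2)) * ∫⁻ x, ‖g x‖ₑ ^ (3 - r) ∂μ :=
        lintegral_const_mul' _ _ ofReal_ne_top
    _ ≤ ENNReal.ofReal (lam ^ (1 - r / 2)) *
        ((∫⁻ x, ‖g x‖ₑ ^ (2 : ℝ) ∂μ) ^ ((3 - r) / 2) * μ Set.univ ^ (1 - (3 - r) / 2)) :=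
        mul_le_mul_right holder _
    _ = _ := by rw [show 1 - (3 - r) / 2 = (r - 1) / 2 by ring]; simp only [enorm_eq_nnnorm]; ring

/-- **Integrated estimate for `1 < r < 2`** (proof of Proposition 3.1). On a finite
measure space, for measurable matrix-valued `g` with `∫ |g|² dμ < ∞`,
`∫ (1 − (1 + λ|g|²)^{r/2−1}) |g| dμ ≤ λ^{1−r/2} μ(X)^{(r−1)/2} (∫ |g|² dμ)^{(3−r)/2}`. -/
theorem integrated_estimate_one_lt_r_lt_two
    {X : Type*} [MeasurableSpace X] (μ : Measure X) [IsFiniteMeasure μ]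
    (r lam : ℝ) (hr1 : 1 < r) (hr2 : r < 2) (hlam : 0 < lam)
    (g : X → M3) (hg : Measurable g)
    (hint : ∫⁻ x, (‖g x‖₊ : ℝ≥0∞) ^ (2 : ℝ) ∂μ < ⊤) :
    ∫⁻ x, ENNReal.ofReal ((1 - (1 + lam * ‖g x‖ ^ 2) ^ (r / 2 - 1)) * ‖g x‖) ∂μ ≤
      ENNReal.ofReal (lam ^ (1 - r / 2)) * (μ Set.univ) ^ ((r - 1) / 2) *
        (∫⁻ x, (‖g x‖₊ : ℝ≥0∞) ^ (2 : ℝ) ∂μ) ^ ((3 - r) / 2) :=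
  integrated_estimate_one_lt_r_lt_two_general μ r lam hr1 hr2 hlam g hg
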